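/- Under the hypotheses of the existence theorem, the operator T is coercive: there exist constants C > 0 (depending only on Ω, k) such that ⟨Tu, u⟩ ≥ k C ‖u‖²_{H^1(Ω)} − k²|Ω|/4 for all u ∈ H^1(Ω); in particular ⟨Tu, u⟩/‖u‖_{H^1(Ω)} → +∞ as ‖u‖_{H^1(Ω)} → +∞. -/

import Mathlib

open MeasureTheory Real Classical
open scoped InnerProductSpace

noncomputable section

/-- Euclidean space `ℝ^N`. -/
abbrev E (N : ℕ) := EuclideanSpace ℝ (Fin N)

/-- Membership in the Sobolev space `H¹(Ω)`: `u` and its gradient are in `L²(Ω)`. -/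
def MemH1 {N : ℕ} (Ω : Set (E N)) (u : E N → ℝ) : Prop :=
  MemLp u 2 (volume.restrict Ω) ∧ MemLp (gradient u) 2 (volume.restrict Ω)

/-- The `H¹(Ω)` norm. -/
def H1norm {N : ℕ} (Ω : Set (E N)) (u : E N → ℝ) : ℝ :=
  Real.sqrt ((∫ x in Ω, (u x) ^ 2) + ∫ x in Ω, ‖gradient u x‖ ^ 2)

/-- The `L²(Ω)` norm. -/
def L2norm {N : ℕ} (Ω : Set (E N)) (u : E N → ℝ) : ℝ :=
  Real.sqrt (∫ x in Ω, (u x) ^ 2)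

/-- The pairing `⟨Tu, φ⟩ = ∫_Ω k_ε ∇u·∇φ + ∫_{Ω∖ω} u³ φ`, where `k_ε = k` on `ω`
and `k_ε = 1` on `Ω∖ω`. -/
def Tpair {N : ℕ} (Ω ω : Set (E N)) (k : ℝ) (u φ : E N → ℝ) : ℝ :=
  (∫ x in Ω, (if x ∈ ω then k else 1) * ⟪gradient u x, gradient φ x⟫_ℝ)
    + ∫ x in Ω \ ω, (u x) ^ 3 * φ x

/-! The weight `k_ε` is at least `k`, and Young's inequality `k u² ≤ u⁴ + k²/4` trades the
quartic term for `k ‖u‖²_{L²(Ω∖ω)}` at the cost of `k²|Ω|/4`. Together with the Poincaré-type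
inequality this bounds `⟨Tu, u⟩` below by `k Cp ‖u‖²_{H¹} − k²|Ω|/4`, a quadratic in
`‖u‖_{H¹}`, which outgrows every linear function. -/

theorem mul_sq_sub_sq_div_four_le_pow_three_mul (k a : ℝ) : k * a ^ 2 - k ^ 2 / 4 ≤ a ^ 3 * a := by
  nlinarith [sq_nonneg (a ^ 2 - k / 2)]

section MeasureSpace

variable {α : Type*} [MeasurableSpace α] {μ : Measure α}

theorem mul_integral_sq_sub_le_integral_pow_three_mul [IsFiniteMeasure μ] {u : α → ℝ}
    (hu : MemLp u 4 μ) (k : ℝ) :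
    k * ∫ x, u x ^ 2 ∂μ - k ^ 2 / 4 * μ.real Set.univ ≤ ∫ x, u x ^ 3 * u x ∂μ := by
  have hu2 : Integrable (fun x => u x ^ 2) μ := (hu.mono_exponent (by norm_num)).integrable_sq
  have hu4 : Integrable (fun x => u x ^ 3 * u x) μ := by
    simpa [← pow_succ, Real.norm_eq_abs, Even.pow_abs (⟨2, rfl⟩ : Even 4)] using
      hu.integrable_norm_pow' (p := 4)
  calc k * ∫ x, u x ^ 2 ∂μ - k ^ 2 / 4 * μ.real Set.univ
      = ∫ x, (k * u x ^ 2 - k ^ 2 / 4) ∂μ := by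
        rw [integral_sub (hu2.const_mul k) (integrable_const _), integral_const_mul,
          integral_const, smul_eq_mul, mul_comm (μ.real _)]
    _ ≤ ∫ x, u x ^ 3 * u x ∂μ :=
        integral_mono ((hu2.const_mul k).sub (integrable_const _)) hu4
          fun x => mul_sq_sub_sq_div_four_le_pow_three_mul k (u x)

theorem mul_integral_le_integral_ite_mul {ω : Set α} (hω : MeasurableSet ω) {k : ℝ}
    (hk0 : 0 ≤ k) (hk1 : k ≤ 1) {g : α → ℝ} (hg0 : ∀ x, 0 ≤ g x) (hg : Integrable g μ) :
    k * ∫ x, g x ∂μ ≤ ∫ x, (if x ∈ ω then k else 1) * g x ∂μ := by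
  have hweight : Integrable (fun x => (if x ∈ ω then k else 1) * g x) μ := by
    refine hg.bdd_mul (c := 1)
      (Measurable.ite hω measurable_const measurable_const).aestronglyMeasurable
      (Filter.Eventually.of_forall fun x => ?_)
    split_ifs <;> simp [abs_of_nonneg hk0, hk1]
  rw [← integral_const_mul]
  refine integral_mono (hg.const_mul k) hweight fun x => ?_
  have := hg0 x
  split_ifs <;> nlinarith

end MeasureSpace

theorem Filter.eventually_mul_le_mul_sq_sub {a : ℝ} (ha : 0 < a) (D M : ℝ) :
    ∀ᶠ t in Filter.atTop, M * t ≤ a * t ^ 2 - D := by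
  filter_upwards [Filter.eventually_ge_atTop 1, Filter.eventually_ge_atTop ((|M| + |D|) / a)]
    with t ht1 htR
  have hat : |M| + |D| ≤ a * t := by rwa [div_le_iff₀ ha, mul_comm] at htR
  nlinarith [le_abs_self M, le_abs_self D, abs_nonneg M, abs_nonneg D]

theorem mul_sq_H1norm_sub_le_Tpair_self {N : ℕ} {Ω ω : Set (E N)} (hΩ : volume Ω ≠ ⊤)
    (hω : MeasurableSet ω) {k : ℝ} (hk0 : 0 ≤ k) (hk1 : k ≤ 1) {Cp : ℝ} {u : E N → ℝ}
    (hgrad : MemLp (gradient u) 2 (volume.restrict Ω)) (hu4 : MemLp u 4 (volume.restrict Ω))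
    (hPoin : Cp * H1norm Ω u ^ 2 ≤ (∫ x in Ω, ‖gradient u x‖ ^ 2) + ∫ x in Ω \ ω, u x ^ 2) :
    k * Cp * H1norm Ω u ^ 2 - k ^ 2 * (volume Ω).toReal / 4 ≤ Tpair Ω ω k u u := by
  have hweighted := mul_integral_le_integral_ite_mul hω hk0 hk1 (fun _ => sq_nonneg _)
    hgrad.norm.integrable_sq (μ := volume.restrict Ω)
  have : IsFiniteMeasure (volume.restrict (Ω \ ω)) :=
    isFiniteMeasure_restrict.2 (ne_top_of_le_ne_top hΩ (measure_mono Set.sdiff_subset))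
  have hquartic := mul_integral_sq_sub_le_integral_pow_three_mul (μ := volume.restrict (Ω \ ω))
    (hu4.mono_measure (Measure.restrict_mono Set.sdiff_subset le_rfl)) k
  rw [measureReal_restrict_apply_univ] at hquartic
  have hvol : volume.real (Ω \ ω) ≤ volume.real Ω := measureReal_mono Set.sdiff_subset hΩ
  have hPoin' := mul_le_mul_of_nonneg_left hPoin hk0
  simp only [Tpair, real_inner_self_eq_norm_sq, ← measureReal_def]
  nlinarith

theorem stmt9_general {N : ℕ}
    (Ω : Set (E N)) (hΩb : Bornology.IsBounded Ω)
    (ω : Set (E N)) (hωm : MeasurableSet ω)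
    (k : ℝ) (hk0 : 0 < k) (hk1 : k < 1)
    (Cp : ℝ) (hCp : 0 < Cp)
    (hPoin : ∀ u : E N → ℝ, MemH1 Ω u →
      Cp * (H1norm Ω u) ^ 2 ≤ (∫ x in Ω, ‖gradient u x‖ ^ 2) + ∫ x in Ω \ ω, (u x) ^ 2) :
    ∃ C > (0 : ℝ),
      (∀ u : E N → ℝ, MemH1 Ω u → MemLp u 4 (volume.restrict Ω) →
        k * C * (H1norm Ω u) ^ 2 - k ^ 2 * (volume Ω).toReal / 4 ≤ Tpair Ω ω k u u) ∧
      (∀ M : ℝ, ∃ R : ℝ, ∀ u : E N → ℝ, MemH1 Ω u → MemLp u 4 (volume.restrict Ω) →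
        R ≤ H1norm Ω u → M * H1norm Ω u ≤ Tpair Ω ω k u u) := by
  have hcoercive : ∀ u : E N → ℝ, MemH1 Ω u → MemLp u 4 (volume.restrict Ω) →
      k * Cp * H1norm Ω u ^ 2 - k ^ 2 * (volume Ω).toReal / 4 ≤ Tpair Ω ω k u u :=
    fun u hu hu4 => mul_sq_H1norm_sub_le_Tpair_self hΩb.measure_lt_top.ne hωm hk0.le hk1.le
      hu.2 hu4 (hPoin u hu)
  refine ⟨Cp, hCp, hcoercive, fun M => ?_⟩
  obtain ⟨R, hR⟩ := Filter.eventually_atTop.1 <| Filter.eventually_mul_le_mul_sq_sub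
    (mul_pos hk0 hCp) (k ^ 2 * (volume Ω).toReal / 4) M
  exact ⟨R, fun u hu hu4 hRu => (hR _ hRu).trans (hcoercive u hu hu4)⟩

/-- Coercivity of the operator `T`: assuming the Poincaré-type inequality
`Cp ‖u‖²_{H¹} ≤ ‖∇u‖²_{L²(Ω)} + ‖u‖²_{L²(Ω∖ω)}`, there is `C > 0` such that
`⟨Tu, u⟩ ≥ k C ‖u‖²_{H¹(Ω)} − k²|Ω|/4`; in particular
`⟨Tu, u⟩ / ‖u‖_{H¹} → +∞` as `‖u‖_{H¹} → +∞`. -/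
theorem stmt9 {N : ℕ} (hN : N = 2 ∨ N = 3)
    (Ω : Set (E N)) (hΩo : IsOpen Ω) (hΩb : Bornology.IsBounded Ω) (hΩc : IsConnected Ω)
    (ω : Set (E N)) (hωm : MeasurableSet ω) (hωΩ : ω ⊆ Ω)
    (k : ℝ) (hk0 : 0 < k) (hk1 : k < 1)
    (Cp : ℝ) (hCp : 0 < Cp)
    (hPoin : ∀ u : E N → ℝ, MemH1 Ω u →
      Cp * (H1norm Ω u) ^ 2 ≤ (∫ x in Ω, ‖gradient u x‖ ^ 2) + ∫ x in Ω \ ω, (u x) ^ 2) :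
    ∃ C > (0 : ℝ),
      (∀ u : E N → ℝ, MemH1 Ω u → MemLp u 4 (volume.restrict Ω) →
        k * C * (H1norm Ω u) ^ 2 - k ^ 2 * (volume Ω).toReal / 4 ≤ Tpair Ω ω k u u) ∧
      (∀ M : ℝ, ∃ R : ℝ, ∀ u : E N → ℝ, MemH1 Ω u → MemLp u 4 (volume.restrict Ω) →
        R ≤ H1norm Ω u → M * H1norm Ω u ≤ Tpair Ω ω k u u) :=
  stmt9_general Ω hΩb ω hωm k hk0 hk1 Cp hCp hPoin
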